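/- Let S be a submonoid of a polycyclic-by-finite group with group of quotients G = SS⁻¹, and assume S satisfies the ascending chain condition on right ideals. Let H be a torsion free normal subgroup of finite index in G such that S ∩ H is G-invariant. If Q is a prime ideal of S ∩ H, then there exists a prime ideal P of S such that P ∩ H = Q ∩ Q₂ ∩ ⋯ ∩ Q_m, where Q, Q₂, …, Q_m are all the prime ideals of S ∩ H minimal over P ∩ H (one says that P lies over Q); moreover each Qᵢ = gᵢ⁻¹Qgᵢ for some gᵢ ∈ G. -/

import Mathlib

open scoped Pointwise

universe u v

section GroupMonoidDefs

variable {G : Type u} [Group G]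

/-- `G` is the group of (two-sided) quotients of the submonoid `S`. -/
def IsGroupOfQuotients (S : Submonoid G) : Prop :=
  ∀ g : G, ∃ s ∈ S, ∃ t ∈ S, g = s * t⁻¹

/-- the set of quotients `s * t⁻¹` of elements of a submonoid. -/
def quotSet (S : Submonoid G) : Set G :=
  {g : G | ∃ s ∈ S, ∃ t ∈ S, g = s * t⁻¹}

/-- a subset of a group closed under conjugation by all group elements. -/
def IsGInvariant (X : Set G) : Prop :=
  ∀ g : G, ∀ x ∈ X, g * x * g⁻¹ ∈ X

/-- the conjugacy class of an element. -/
def conjClassSet (x : G) : Set G :=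
  {y : G | ∃ g : G, y = g * x * g⁻¹}

/-- right ideal of a submonoid, given as a subset of the ambient group. -/
def IsRightIdealOfSubmonoid (S : Submonoid G) (I : Set G) : Prop :=
  I.Nonempty ∧ I ⊆ (S : Set G) ∧ ∀ x ∈ I, ∀ s ∈ S, x * s ∈ I

/-- ascending chain condition on right ideals of a submonoid. -/
def ACCRightIdeals (S : Submonoid G) : Prop :=
  ∀ f : ℕ → Set G, (∀ n, IsRightIdealOfSubmonoid S (f n)) →
    (∀ n, f n ⊆ f (n + 1)) → ∃ N, ∀ n, N ≤ n → f n = f N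

/-- (two-sided) ideal of a submonoid. -/
def IsIdealOfSubmonoid (S : Submonoid G) (I : Set G) : Prop :=
  I.Nonempty ∧ I ⊆ (S : Set G) ∧ ∀ s ∈ S, ∀ x ∈ I, ∀ t ∈ S, s * x * t ∈ I

/-- prime ideal of a submonoid. -/
def IsPrimeIdealOfSubmonoid (S : Submonoid G) (P : Set G) : Prop :=
  IsIdealOfSubmonoid S P ∧ P ≠ (S : Set G) ∧
    ∀ I J : Set G, IsIdealOfSubmonoid S I → IsIdealOfSubmonoid S J →
      I * J ⊆ P → I ⊆ P ∨ J ⊆ P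

/-- minimal prime ideal of a submonoid. -/
def IsMinimalPrimeOfSubmonoid (S : Submonoid G) (P : Set G) : Prop :=
  IsPrimeIdealOfSubmonoid S P ∧
    ∀ Q : Set G, IsPrimeIdealOfSubmonoid S Q → Q ⊆ P → Q = P

/-- prime ideal of a submonoid which is minimal over the subset `I`. -/
def IsMinimalPrimeOver (S : Submonoid G) (I Q : Set G) : Prop :=
  IsPrimeIdealOfSubmonoid S Q ∧ I ⊆ Q ∧
    ∀ Q' : Set G, IsPrimeIdealOfSubmonoid S Q' → I ⊆ Q' → Q' ⊆ Q → Q' = Q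

/-- `P`, a prime ideal of `S`, lies over `Q`, a prime ideal of `S ∩ H`:
`Q` is minimal over `P ∩ H` and `P ∩ H` is the intersection of all primes of
`S ∩ H` minimal over `P ∩ H`. -/
def LiesOver (S : Submonoid G) (H : Subgroup G) (P Q : Set G) : Prop :=
  IsPrimeIdealOfSubmonoid S P ∧
  IsMinimalPrimeOver (S ⊓ H.toSubmonoid) (P ∩ (H : Set G)) Q ∧
  P ∩ (H : Set G) =
    ⋂₀ {Q' : Set G | IsMinimalPrimeOver (S ⊓ H.toSubmonoid) (P ∩ (H : Set G)) Q'}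

/-- the unit group of a submonoid of a group, as a subgroup. -/
def unitGroup (S : Submonoid G) : Subgroup G where
  carrier := {g : G | g ∈ S ∧ g⁻¹ ∈ S}
  one_mem' := ⟨S.one_mem, by simpa using S.one_mem⟩
  mul_mem' := by
    intro a b ha hb
    exact ⟨S.mul_mem ha.1 hb.1, by
      rw [mul_inv_rev]; exact S.mul_mem hb.2 ha.2⟩
  inv_mem' := by
    intro a ha
    exact ⟨ha.2, by simpa using ha.1⟩

/-- `S` is a maximal order within its group of quotients. -/
def IsMaximalOrderWithin (S : Submonoid G) : Prop :=
  ∀ T : Submonoid G, S ≤ T → (T : Set G) ⊆ quotSet S →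
    (∃ a ∈ quotSet S, ∃ b ∈ quotSet S, ∀ t ∈ T, a * t * b ∈ S) → T = S

/-- a chain `∅ = Q₀ ⊂ Q₁ ⊂ ⋯ ⊂ Qₙ` of prime ideals of `S` (of length `n`). -/
def HasMonoidDimChain (S : Submonoid G) (n : ℕ) : Prop :=
  ∃ c : Fin (n + 1) → Set G, c 0 = ∅ ∧
    (∀ i : Fin (n + 1), i ≠ 0 → IsPrimeIdealOfSubmonoid S (c i)) ∧
    ∀ i j : Fin (n + 1), i < j → c i ⊂ c j

/-- the prime dimension of the monoid `S` equals `n`. -/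
def MonoidDimEq (S : Submonoid G) (n : ℕ) : Prop :=
  HasMonoidDimChain S n ∧ ¬ HasMonoidDimChain S (n + 1)

/-- a chain `∅ = Q₀ ⊂ Q₁ ⊂ ⋯ ⊂ Qₙ = P` of prime ideals ending at `P`. -/
def HasMonoidHeightChain (S : Submonoid G) (P : Set G) (n : ℕ) : Prop :=
  ∃ c : Fin (n + 1) → Set G, c 0 = ∅ ∧ c (Fin.last n) = P ∧
    (∀ i : Fin (n + 1), i ≠ 0 → IsPrimeIdealOfSubmonoid S (c i)) ∧
    ∀ i j : Fin (n + 1), i < j → c i ⊂ c j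

/-- the height of the prime ideal `P` of `S` equals `n`. -/
def MonoidHeightEq (S : Submonoid G) (P : Set G) (n : ℕ) : Prop :=
  HasMonoidHeightChain S P n ∧ ¬ HasMonoidHeightChain S P (n + 1)

/-- a chain `Q₀ ⊂ ⋯ ⊂ Qₙ` of primes of `S` containing `P`; this corresponds to a
chain of primes of the Rees quotient `S/P` (including its zero ideal). -/
def HasDimChainOver (S : Submonoid G) (P : Set G) (n : ℕ) : Prop :=
  ∃ c : Fin (n + 1) → Set G,
    (∀ i, IsPrimeIdealOfSubmonoid S (c i) ∧ P ⊆ c i) ∧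
    ∀ i j : Fin (n + 1), i < j → c i ⊂ c j

/-- the prime dimension of the Rees quotient `S/P` equals `n`. -/
def DimOverEq (S : Submonoid G) (P : Set G) (n : ℕ) : Prop :=
  HasDimChainOver S P n ∧ ¬ HasDimChainOver S P (n + 1)

/-- the Rees quotient `S/P` contains a free abelian subsemigroup of rank `k`. -/
def HasFreeAbelianInRank (S : Submonoid G) (P : Set G) (k : ℕ) : Prop :=
  ∃ x : Fin k → G, (∀ i, x i ∈ S ∧ x i ∉ P) ∧
    (∀ i j, x i * x j = x j * x i) ∧
    (∀ m : Fin k → ℕ, m ≠ 0 → (List.ofFn fun i => x i ^ m i).prod ∉ P) ∧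
    ∀ m m' : Fin k → ℕ,
      (List.ofFn fun i => x i ^ m i).prod = (List.ofFn fun i => x i ^ m' i).prod → m = m'

/-- the rank of the Rees quotient monoid `S/P` equals `r`. -/
def ReesRankEq (S : Submonoid G) (P : Set G) (r : ℕ) : Prop :=
  HasFreeAbelianInRank S P r ∧ ¬ HasFreeAbelianInRank S P (r + 1)

/-- the factor `B/A` is a cyclic group, generated by the image of some `x ∈ B`. -/
def FactorCyclic (A B : Subgroup G) : Prop :=
  ∃ x ∈ B, ∀ y ∈ B, ∃ k : ℤ, (x ^ k)⁻¹ * y ∈ A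

/-- the factor `B/A` is an infinite cyclic group. -/
def FactorInfiniteCyclic (A B : Subgroup G) : Prop :=
  ∃ x ∈ B, (∀ y ∈ B, ∃ k : ℤ, (x ^ k)⁻¹ * y ∈ A) ∧ ∀ k : ℤ, x ^ k ∈ A → k = 0

end GroupMonoidDefs

/-- a group is polycyclic-by-finite: it has a subnormal series with each factor
cyclic or finite. -/
def IsPolycyclicByFinite (G : Type u) [Group G] : Prop :=
  ∃ (n : ℕ) (c : Fin (n + 1) → Subgroup G),
    c 0 = ⊥ ∧ c (Fin.last n) = ⊤ ∧
    ∀ i : Fin n, c i.castSucc ≤ c i.succ ∧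
      (∀ x ∈ c i.succ, ∀ y ∈ c i.castSucc, x * y * x⁻¹ ∈ c i.castSucc) ∧
      (FactorCyclic (c i.castSucc) (c i.succ) ∨ (c i.castSucc).relIndex (c i.succ) ≠ 0)

/-- a group is poly-(infinite cyclic): it has a subnormal series with each factor
infinite cyclic. -/
def IsPolyInfiniteCyclicGroup (G : Type u) [Group G] : Prop :=
  ∃ (n : ℕ) (c : Fin (n + 1) → Subgroup G),
    c 0 = ⊥ ∧ c (Fin.last n) = ⊤ ∧
    ∀ i : Fin n, c i.castSucc ≤ c i.succ ∧
      (∀ x ∈ c i.succ, ∀ y ∈ c i.castSucc, x * y * x⁻¹ ∈ c i.castSucc) ∧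
      FactorInfiniteCyclic (c i.castSucc) (c i.succ)

/-- a group is abelian-by-finite: it has an abelian normal subgroup of finite index. -/
def IsAbelianByFinite (G : Type u) [Group G] : Prop :=
  ∃ A : Subgroup G, A.Normal ∧ A.FiniteIndex ∧ ∀ x ∈ A, ∀ y ∈ A, x * y = y * x

/-- `Δ⁺(G)`: the set of periodic elements having finitely many conjugates. -/
def deltaPlusSet (G : Type u) [Group G] : Set G :=
  {g : G | (∃ n : ℕ, 0 < n ∧ g ^ n = 1) ∧ (conjClassSet g).Finite}

/-- a group is dihedral free if the normalizer of every infinite dihedral subgroup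
has infinite index. -/
def IsDihedralFree (G : Type u) [Group G] : Prop :=
  ∀ D : Subgroup G, Nonempty (D ≃* DihedralGroup 0) → (Subgroup.normalizer (D : Set G)).index = 0

/-- the torsion-free rank of a (finitely generated abelian-by-finite) group:
the rank of a free abelian subgroup of finite index. -/
def HasTorsionFreeRank (G : Type u) [Group G] (r : ℕ) : Prop :=
  ∃ A : Subgroup G, A.FiniteIndex ∧ Nonempty (A ≃* Multiplicative (Fin r → ℤ))

/-- `B/A` is a plinth section of `G`: a nontrivial torsion-free abelian section
which is rationally irreducible under every subgroup of finite index of `G`. -/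
def IsPlinthSection (G : Type u) [Group G] (A B : Subgroup G) : Prop :=
  A < B ∧
  (∀ x ∈ B, ∀ y ∈ B, x * y * x⁻¹ * y⁻¹ ∈ A) ∧
  (∀ x ∈ B, ∀ n : ℕ, 0 < n → x ^ n ∈ A → x ∈ A) ∧
  ∀ W : Subgroup G, W.FiniteIndex →
    ∀ C : Subgroup G, A ≤ C → C ≤ B →
      (∀ w ∈ W, ∀ c ∈ C, w * c * w⁻¹ ∈ C) →
      (C = A ∨ ∀ x ∈ B, ∃ n : ℕ, 0 < n ∧ x ^ n ∈ C)

/-- the plinth length of `G` equals `p`: some finite index subgroup `G₀` has a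
series whose factors are finite or plinths, with exactly `p` plinth factors. -/
def PlinthLengthEq (G : Type u) [Group G] (p : ℕ) : Prop :=
  ∃ G₀ : Subgroup G, G₀.FiniteIndex ∧
    ∃ (n : ℕ) (c : Fin (n + 1) → Subgroup G) (pl : Fin n → Bool),
      c 0 = ⊥ ∧ c (Fin.last n) = G₀ ∧
      (∀ i : Fin n, c i.castSucc ≤ c i.succ) ∧
      (∀ i : Fin (n + 1), ∀ g ∈ G₀, ∀ x ∈ c i, g * x * g⁻¹ ∈ c i) ∧
      (∀ i : Fin n,
        (pl i = true → IsPlinthSection G (c i.castSucc) (c i.succ)) ∧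
        (pl i = false → (c i.castSucc).relIndex (c i.succ) ≠ 0)) ∧
      (Finset.univ.filter fun i => pl i = true).card = p

/-- (two-sided) ideal of an abstract monoid. -/
def IsIdealOfMonoid (M : Type u) [Monoid M] (I : Set M) : Prop :=
  I.Nonempty ∧ ∀ s x t : M, x ∈ I → s * x * t ∈ I

/-- prime ideal of an abstract monoid. -/
def IsPrimeIdealOfMonoid (M : Type u) [Monoid M] (P : Set M) : Prop :=
  IsIdealOfMonoid M P ∧ P ≠ Set.univ ∧
    ∀ I J : Set M, IsIdealOfMonoid M I → IsIdealOfMonoid M J →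
      I * J ⊆ P → I ⊆ P ∨ J ⊆ P

/-- a realization of a group of (two-sided) quotients of a monoid `S`. -/
structure GroupOfQuotientsRealization (S : Type u) [Monoid S] : Type (u + 1) where
  carrier : Type u
  [grp : Group carrier]
  emb : S →* carrier
  inj : Function.Injective emb
  quot : ∀ g : carrier, ∃ s t : S, g = emb s * (emb t)⁻¹

section RingDefs

/-- two-sided ideal of a ring, as a set. -/
def IsTwoSidedIdealSet (R : Type u) [Ring R] (I : Set R) : Prop :=
  (0 : R) ∈ I ∧ (∀ x ∈ I, ∀ y ∈ I, x + y ∈ I) ∧ (∀ x ∈ I, -x ∈ I) ∧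
    ∀ r : R, ∀ x ∈ I, r * x ∈ I ∧ x * r ∈ I

/-- prime two-sided ideal of a (possibly noncommutative) ring. -/
def IsPrimeTwoSidedIdeal (R : Type u) [Ring R] (P : Set R) : Prop :=
  IsTwoSidedIdealSet R P ∧ P ≠ Set.univ ∧
    ∀ a b : R, (∀ r : R, a * r * b ∈ P) → a ∈ P ∨ b ∈ P

/-- a prime ring. -/
def IsPrimeRing (R : Type u) [Ring R] : Prop :=
  ∀ a b : R, (∀ r : R, a * r * b = 0) → a = 0 ∨ b = 0

/-- a chain `P₀ ⊂ ⋯ ⊂ Pₙ = P` of prime two-sided ideals ending at `P`. -/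
def HasPrimeChainTo (R : Type u) [Ring R] (P : Set R) (n : ℕ) : Prop :=
  ∃ c : Fin (n + 1) → Set R, (∀ i, IsPrimeTwoSidedIdeal R (c i)) ∧
    (∀ i j : Fin (n + 1), i < j → c i ⊂ c j) ∧ c (Fin.last n) = P

/-- the height of the prime two-sided ideal `P` equals `n`. -/
def RingHeightEq (R : Type u) [Ring R] (P : Set R) (n : ℕ) : Prop :=
  HasPrimeChainTo R P n ∧ ¬ HasPrimeChainTo R P (n + 1)

/-- a chain `P₀ ⊂ ⋯ ⊂ Pₙ` of prime two-sided ideals of `R`. -/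
def HasRingPrimeChain (R : Type u) [Ring R] (n : ℕ) : Prop :=
  ∃ c : Fin (n + 1) → Set R, (∀ i, IsPrimeTwoSidedIdeal R (c i)) ∧
    ∀ i j : Fin (n + 1), i < j → c i ⊂ c j

/-- the classical Krull dimension of `R` equals `n`. -/
def ClKdimEq (R : Type u) [Ring R] (n : ℕ) : Prop :=
  HasRingPrimeChain R n ∧ ¬ HasRingPrimeChain R (n + 1)

/-- a prime two-sided ideal minimal over the set `I`. -/
def IsMinimalPrimeOverRing (R : Type u) [Ring R] (I P : Set R) : Prop :=
  IsPrimeTwoSidedIdeal R P ∧ I ⊆ P ∧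
    ∀ P' : Set R, IsPrimeTwoSidedIdeal R P' → I ⊆ P' → P' ⊆ P → P' = P

/-- `f : R →+* Q` realizes `Q` as the classical (two-sided) quotient ring of `R`. -/
def IsClassicalQuotientRing {R Q : Type u} [Ring R] [Ring Q] (f : R →+* Q) : Prop :=
  Function.Injective f ∧
  (∀ r : R, IsRegular r → IsUnit (f r)) ∧
  (∀ q : Q, ∃ r s : R, IsRegular s ∧ q * f s = f r) ∧
  (∀ q : Q, ∃ r s : R, IsRegular s ∧ f s * q = f r)

/-- `R` is a maximal order: for every realization of its classical quotient ring `Q`,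
there is no intermediate ring `R ⊆ T ⊆ Q` with `aTb ⊆ R` for regular `a b ∈ Q`
other than (the image of) `R` itself. -/
def IsRingMaximalOrder (R : Type u) [Ring R] : Prop :=
  ∀ (Q : Type u) [Ring Q], ∀ f : R →+* Q, IsClassicalQuotientRing f →
    ∀ T : Subring Q, (∀ r : R, f r ∈ T) →
      (∃ a b : Q, IsRegular a ∧ IsRegular b ∧
        ∀ t ∈ T, ∃ r : R, a * t * b = f r) →
      ∀ t ∈ T, ∃ r : R, t = f r

/-- `R` satisfies a polynomial identity: a monic noncommutative polynomial with
integer coefficients vanishing identically on `R`. -/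
def IsPIRing (R : Type u) [Ring R] : Prop :=
  ∃ (n : ℕ) (f : MonoidAlgebra ℤ (FreeMonoid (Fin n))),
    (∃ w : FreeMonoid (Fin n), f.coeff w = 1 ∧
      ∀ w' : FreeMonoid (Fin n), f.coeff w' ≠ 0 →
        (FreeMonoid.toList w').length ≤ (FreeMonoid.toList w).length) ∧
    ∀ v : Fin n → R,
      (MonoidAlgebra.lift (R := ℤ) (M := FreeMonoid (Fin n)) (A := R)) (FreeMonoid.lift v) f = 0

end RingDefs

/-- the `K`-linear span `K[Q]` of a subset `Q` of a monoid `M` inside `K[M]`. -/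
def monoidSpan (K : Type u) [Field K] {M : Type v} [Monoid M] (Q : Set M) :
    Set (MonoidAlgebra K M) :=
  ↑(Submodule.span K ((fun m : M => (MonoidAlgebra.of K M m : MonoidAlgebra K M)) '' Q))

/-- the `K`-linear span `K[Q]` of a subset `Q ⊆ S` inside the semigroup algebra `K[S]`. -/
def submonoidSpan (K : Type u) [Field K] {G : Type v} [Group G] (S : Submonoid G)
    (Q : Set G) : Set (MonoidAlgebra K ↥S) :=
  ↑(Submodule.span K
      ((fun s : ↥S => (MonoidAlgebra.of K ↥S s : MonoidAlgebra K ↥S)) ''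
        {s : ↥S | (s : G) ∈ Q}))

/-!
Put `T = S ∩ H` and let `P = {x ∈ S | SxS ∩ H ⊆ Q}`, the largest ideal of `S` with `P ∩ H ⊆ Q`;
it is prime because `Q` is. Call `a ∈ S` relevant when `aS ∩ H ⊄ Q`. The ascending chain
condition gives a finite `F ⊆ S` with `S = FT`. For relevant `a` the conjugate `Qᵃ = a⁻¹Qa`
contains `P ∩ H`; conversely, if `x ∈ T` lies in `Qᵃ` for every relevant `a ∈ F`, then `x ∈ P`:
writing `s = au`, `t = a'u'` with `a, a' ∈ F` and `u, u' ∈ T`, `sxt ∈ Q` follows from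
`axa' = (axa⁻¹)(aa')`, where `aa' ∈ Q` unless `a` is relevant. So `P ∩ H` is a finite
intersection of conjugates `Qᵃ`, and a prime of `T` containing it contains one of them. The chain
condition also rules out `Qᵃ ⊊ Qᵇ`, as otherwise `Q ⊊ Qʷ ⊊ Q^(w²) ⊊ ⋯` for `w = ba⁻¹`. Hence the
primes minimal over `P ∩ H` are exactly the relevant conjugates of `Q` (among them `Q = Q¹`), and
their intersection is `P ∩ H`.
-/

section SubmonoidIdeals

variable {G : Type u} [Group G] {T : Submonoid G} {I J P : Set G}

theorem IsGInvariant.conj_mem_iff {X : Set G} (hX : IsGInvariant X) (g x : G) :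
    MulAut.conj g x ∈ X ↔ x ∈ X :=
  ⟨fun h => by simpa [mul_assoc] using hX g⁻¹ _ h, hX g x⟩

theorem preimage_conj_eq_image (g : G) (X : Set G) :
    MulAut.conj g ⁻¹' X = (fun x => g⁻¹ * x * g) '' X := by
  ext x
  refine ⟨fun hx => ⟨_, hx, by simp [mul_assoc]⟩, ?_⟩
  rintro ⟨y, hy, rfl⟩
  simpa [mul_assoc] using hy

theorem IsIdealOfSubmonoid.mul_mem_left (hI : IsIdealOfSubmonoid T I) {s x : G} (hs : s ∈ T)
    (hx : x ∈ I) : s * x ∈ I := by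
  simpa using hI.2.2 s hs x hx 1 T.one_mem

theorem IsIdealOfSubmonoid.mul_mem_right (hI : IsIdealOfSubmonoid T I) {x t : G} (hx : x ∈ I)
    (ht : t ∈ T) : x * t ∈ I := by
  simpa using hI.2.2 1 T.one_mem x hx t ht

theorem IsIdealOfSubmonoid.mul_subset_inter (hI : IsIdealOfSubmonoid T I)
    (hJ : IsIdealOfSubmonoid T J) : I * J ⊆ I ∩ J := by
  rintro _ ⟨x, hx, y, hy, rfl⟩
  exact ⟨hI.mul_mem_right hx (hJ.2.1 hy), hJ.mul_mem_left (hI.2.1 hx) hy⟩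

theorem IsIdealOfSubmonoid.inter (hI : IsIdealOfSubmonoid T I) (hJ : IsIdealOfSubmonoid T J) :
    IsIdealOfSubmonoid T (I ∩ J) :=
  ⟨(hI.1.mul hJ.1).mono (hI.mul_subset_inter hJ), Set.inter_subset_left.trans hI.2.1,
    fun s hs x hx t ht => ⟨hI.2.2 s hs x hx.1 t ht, hJ.2.2 s hs x hx.2 t ht⟩⟩

theorem isIdealOfSubmonoid_biInter {ι : Type*} {F : Finset ι} (hF : F.Nonempty) {I : ι → Set G}
    (hI : ∀ i ∈ F, IsIdealOfSubmonoid T (I i)) : IsIdealOfSubmonoid T (⋂ i ∈ F, I i) := by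
  classical
  induction hF using Finset.Nonempty.cons_induction with
  | singleton i => simpa using hI i (Finset.mem_singleton_self i)
  | cons i F hi hF ih =>
    rw [Finset.cons_eq_insert, Finset.set_biInter_insert]
    exact (hI i (by simp)).inter (ih fun j hj => hI j (by simp [hj]))

theorem IsPrimeIdealOfSubmonoid.one_notMem (hP : IsPrimeIdealOfSubmonoid T P) : (1 : G) ∉ P :=
  fun h => hP.2.1 (hP.1.2.1.antisymm fun x hx => by simpa using hP.1.mul_mem_left hx h)

theorem IsPrimeIdealOfSubmonoid.exists_subset_of_biInter_subset (hP : IsPrimeIdealOfSubmonoid T P)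
    {ι : Type*} {F : Finset ι} (hF : F.Nonempty) {I : ι → Set G}
    (hI : ∀ i ∈ F, IsIdealOfSubmonoid T (I i)) (h : ⋂ i ∈ F, I i ⊆ P) : ∃ i ∈ F, I i ⊆ P := by
  classical
  induction hF using Finset.Nonempty.cons_induction with
  | singleton i => exact ⟨i, Finset.mem_singleton_self i, by simpa using h⟩
  | cons i F hi hF ih =>
    rw [Finset.cons_eq_insert, Finset.set_biInter_insert] at h
    have hIF : ∀ j ∈ F, IsIdealOfSubmonoid T (I j) := fun j hj => hI j (by simp [hj])
    have hIi := hI i (by simp)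
    rcases hP.2.2 _ _ hIi (isIdealOfSubmonoid_biInter hF hIF)
        ((hIi.mul_subset_inter (isIdealOfSubmonoid_biInter hF hIF)).trans h) with hi | hF
    · exact ⟨i, by simp, hi⟩
    · obtain ⟨j, hj, hjP⟩ := ih hIF hF
      exact ⟨j, by simp [hj], hjP⟩

def principalIdeal (T : Submonoid G) (x : G) : Set G :=
  {z | ∃ s ∈ T, ∃ t ∈ T, z = s * x * t}

theorem mem_principalIdeal_self (x : G) : x ∈ principalIdeal T x :=
  ⟨1, T.one_mem, 1, T.one_mem, by simp⟩

theorem isIdealOfSubmonoid_principalIdeal {x : G} (hx : x ∈ T) :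
    IsIdealOfSubmonoid T (principalIdeal T x) := by
  refine ⟨⟨x, mem_principalIdeal_self x⟩, ?_, ?_⟩
  · rintro _ ⟨s, hs, t, ht, rfl⟩
    exact T.mul_mem (T.mul_mem hs hx) ht
  · rintro s hs _ ⟨s', hs', t', ht', rfl⟩ t ht
    exact ⟨s * s', T.mul_mem hs hs', t' * t, T.mul_mem ht' ht, by simp only [mul_assoc]⟩

theorem IsPrimeIdealOfSubmonoid.mem_or_mem (hP : IsPrimeIdealOfSubmonoid T P) {x y : G}
    (hx : x ∈ T) (hy : y ∈ T) (h : ∀ t ∈ T, x * t * y ∈ P) : x ∈ P ∨ y ∈ P := by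
  have hsub : principalIdeal T x * principalIdeal T y ⊆ P := by
    rintro _ ⟨_, ⟨s, hs, t, ht, rfl⟩, _, ⟨s', hs', t', ht', rfl⟩, rfl⟩
    simpa only [mul_assoc] using hP.1.2.2 s hs _ (h (t * s') (T.mul_mem ht hs')) t' ht'
  exact (hP.2.2 _ _ (isIdealOfSubmonoid_principalIdeal hx) (isIdealOfSubmonoid_principalIdeal hy)
    hsub).imp (· (mem_principalIdeal_self x)) (· (mem_principalIdeal_self y))

section Automorphism

variable (φ : G ≃* G) (hφ : ∀ x, φ x ∈ T ↔ x ∈ T)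
include hφ

theorem IsIdealOfSubmonoid.preimage (hI : IsIdealOfSubmonoid T I) :
    IsIdealOfSubmonoid T (φ ⁻¹' I) := by
  obtain ⟨x, hx⟩ := hI.1
  refine ⟨⟨φ.symm x, by simpa using hx⟩, fun y hy => (hφ y).1 (hI.2.1 hy),
    fun s hs y hy t ht => ?_⟩
  simpa using hI.2.2 _ ((hφ s).2 hs) _ hy _ ((hφ t).2 ht)

theorem IsPrimeIdealOfSubmonoid.preimage (hP : IsPrimeIdealOfSubmonoid T P) :
    IsPrimeIdealOfSubmonoid T (φ ⁻¹' P) := by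
  have hφ' : ∀ x, φ.symm x ∈ T ↔ x ∈ T := fun x => by simpa using (hφ (φ.symm x)).symm
  refine ⟨hP.1.preimage φ hφ, fun h => hP.2.1 ?_, fun I J hI hJ hIJ => ?_⟩
  · ext x
    simpa [hφ'] using Set.ext_iff.1 h (φ.symm x)
  · have hsub : φ.symm ⁻¹' I * φ.symm ⁻¹' J ⊆ P := by
      rintro _ ⟨x, hx, y, hy, rfl⟩
      simpa using hIJ (Set.mul_mem_mul hx hy)
    exact (hP.2.2 _ _ (hI.preimage _ hφ') (hJ.preimage _ hφ') hsub).imp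
      (fun h x hx => h (by simpa using hx)) (fun h x hx => h (by simpa using hx))

end Automorphism

end SubmonoidIdeals

section ChainConditions

variable {G : Type u} [Group G]

def ACCIdeals (T : Submonoid G) : Prop :=
  ∀ f : ℕ → Set G, (∀ n, IsIdealOfSubmonoid T (f n)) →
    (∀ n, f n ⊆ f (n + 1)) → ∃ N, ∀ n, N ≤ n → f n = f N

theorem ACCIdeals.preimage_eq_of_subset_preimage {T : Submonoid G} (hacc : ACCIdeals T)
    {φ : G ≃* G} (hφ : ∀ x, φ x ∈ T ↔ x ∈ T) {I : Set G} (hI : IsIdealOfSubmonoid T I)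
    (h : I ⊆ φ ⁻¹' I) : φ ⁻¹' I = I := by
  have hpow : ∀ n : ℕ, ∀ x, (φ ^ n) x ∈ T ↔ x ∈ T := by
    intro n
    induction n with
    | zero => simp
    | succ n ih => intro x; rw [pow_succ, MulAut.mul_apply, ih, hφ]
  have hchain : ∀ n : ℕ, (φ ^ n) ⁻¹' I ⊆ (φ ^ (n + 1)) ⁻¹' I := fun n => by
    rw [pow_succ', MulAut.coe_mul, Set.preimage_comp]
    exact Set.preimage_mono h
  obtain ⟨N, hN⟩ := hacc _ (fun n => hI.preimage _ (hpow n)) hchain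
  have hstable := hN (N + 1) N.le_succ
  rw [pow_succ', MulAut.coe_mul, Set.preimage_comp] at hstable
  exact Set.preimage_injective.2 (φ ^ N).surjective hstable

theorem ACCIdeals.preimage_conj_eq_of_subset {T : Submonoid G} (hacc : ACCIdeals T)
    (hT : IsGInvariant (T : Set G)) {I : Set G} (hI : IsIdealOfSubmonoid T I) {a b : G}
    (h : MulAut.conj a ⁻¹' I ⊆ MulAut.conj b ⁻¹' I) :
    MulAut.conj a ⁻¹' I = MulAut.conj b ⁻¹' I := by
  have e : MulAut.conj b ⁻¹' I = MulAut.conj (a⁻¹ * b) ⁻¹' (MulAut.conj a ⁻¹' I) := by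
    rw [← Set.preimage_comp, ← MulAut.coe_mul, ← map_mul, mul_inv_cancel_left]
  rw [e] at h ⊢
  exact (hacc.preimage_eq_of_subset_preimage (hT.conj_mem_iff _)
    (hI.preimage _ (hT.conj_mem_iff a)) h).symm

variable {S : Submonoid G}

theorem isRightIdealOfSubmonoid_mul {Y : Set G} (hY : Y.Nonempty) (hYS : Y ⊆ S) :
    IsRightIdealOfSubmonoid S (Y * S) :=
  ⟨hY.mul ⟨1, S.one_mem⟩, by rintro _ ⟨y, hy, s, hs, rfl⟩; exact S.mul_mem (hYS hy) hs,
    by rintro _ ⟨y, hy, s, hs, rfl⟩ s' hs'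
       exact ⟨y, hy, s * s', S.mul_mem hs hs', (mul_assoc ..).symm⟩⟩

theorem ACCRightIdeals.accIdeals_inf (hacc : ACCRightIdeals S) (H : Subgroup G) :
    ACCIdeals (S ⊓ H.toSubmonoid) := by
  intro f hf hmono
  have hright : ∀ n, IsRightIdealOfSubmonoid S (f n * S) := fun n =>
    isRightIdealOfSubmonoid_mul (hf n).1 fun x hx => ((hf n).2.1 hx).1
  have hcontract : ∀ n, f n * S ∩ H = f n := fun n => by
    refine Set.Subset.antisymm ?_ fun x hx => ⟨⟨x, hx, 1, S.one_mem, mul_one x⟩, ((hf n).2.1 hx).2⟩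
    rintro _ ⟨⟨x, hx, s, hs, rfl⟩, hxs⟩
    have hxH : x ∈ H := ((hf n).2.1 hx).2
    refine (hf n).mul_mem_right hx ⟨hs, ?_⟩
    simpa using H.mul_mem (H.inv_mem hxH) hxs
  obtain ⟨N, hN⟩ := hacc (fun n => f n * S) hright fun n => Set.mul_subset_mul_right (hmono n)
  exact ⟨N, fun n hn => by rw [← hcontract n, ← hcontract N, hN n hn]⟩

theorem ACCRightIdeals.exists_finset_subset_mul (hacc : ACCRightIdeals S) {X : Set G}
    (hX : X ⊆ S) : ∃ F : Finset G, ↑F ⊆ X ∧ X ⊆ ↑F * ↑S := by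
  classical
  rcases X.eq_empty_or_nonempty with rfl | ⟨x₀, hx₀⟩
  · exact ⟨∅, by simp, by simp⟩
  let R := {I : Set G // IsRightIdealOfSubmonoid S I}
  have hwf : WellFoundedGT R := by
    rw [wellFoundedGT_iff_monotone_chain_condition]
    intro a
    obtain ⟨N, hN⟩ := hacc (fun n => (a n).1) (fun n => (a n).2) fun n => a.monotone n.le_succ
    exact ⟨N, fun m hm => Subtype.ext (hN m hm).symm⟩
  have hgen : ∀ F : Finset G, ↑F ⊆ X → F.Nonempty → IsRightIdealOfSubmonoid S (↑F * ↑S) :=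
    fun F hFX hF => isRightIdealOfSubmonoid_mul hF (hFX.trans hX)
  obtain ⟨⟨_, hI⟩, ⟨F, hFX, hFne, rfl⟩, hmax⟩ := hwf.wf.has_min
    {I : R | ∃ F : Finset G, ↑F ⊆ X ∧ F.Nonempty ∧ I.1 = ↑F * ↑S}
    ⟨⟨_, hgen {x₀} (by simpa using hx₀) (Finset.singleton_nonempty x₀)⟩, {x₀}, by simpa using hx₀,
      Finset.singleton_nonempty x₀, rfl⟩
  refine ⟨F, hFX, fun x hx => ?_⟩
  have hFx : ↑(insert x F) ⊆ X := by simpa [Set.insert_subset_iff] using ⟨hx, hFX⟩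
  have hle : (⟨_, hI⟩ : R) ≤ ⟨_, hgen _ hFx (Finset.insert_nonempty x F)⟩ :=
    Set.mul_subset_mul_right (by simp)
  have heq := eq_of_le_of_not_lt hle (hmax _ ⟨insert x F, hFx, Finset.insert_nonempty x F, rfl⟩)
  have hxmem : x ∈ (↑(insert x F) : Set G) * S := ⟨x, by simp, 1, S.one_mem, mul_one x⟩
  rwa [Subtype.mk.inj heq]

theorem ACCRightIdeals.exists_finset_subset_mul_inf (hacc : ACCRightIdeals S) {H : Subgroup G}
    (hfi : H.FiniteIndex) :
    ∃ F : Finset G, ↑F ⊆ (S : Set G) ∧ (S : Set G) ⊆ ↑F * ↑(S ⊓ H.toSubmonoid) := by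
  classical
  have : Fintype (G ⧸ H) := Fintype.ofFinite _
  choose F hFX hXF using fun c : G ⧸ H =>
    hacc.exists_finset_subset_mul (X := {s ∈ S | (s : G ⧸ H) = c}) fun s hs => hs.1
  refine ⟨Finset.univ.biUnion F, fun a ha => ?_, fun s hs => ?_⟩
  · obtain ⟨c, -, hac⟩ := Finset.mem_biUnion.1 ha
    exact (hFX c hac).1
  · obtain ⟨a, ha, t, ht, rfl⟩ := hXF (s : G ⧸ H) ⟨hs, rfl⟩
    refine ⟨a, Finset.mem_biUnion.2 ⟨_, Finset.mem_univ _, ha⟩, t, ⟨ht, ?_⟩, rfl⟩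
    simpa using QuotientGroup.eq.1 (hFX _ ha).2

end ChainConditions

section LyingOver

variable {G : Type u} [Group G] {S : Submonoid G} {H : Subgroup G} {Q : Set G}

def coreIdeal (S : Submonoid G) (H : Subgroup G) (Q : Set G) : Set G :=
  {x | x ∈ S ∧ ∀ s ∈ S, ∀ t ∈ S, s * x * t ∈ H → s * x * t ∈ Q}

def relevantConjugators (S : Submonoid G) (H : Subgroup G) (Q : Set G) : Set G :=
  {a | a ∈ S ∧ ∃ b ∈ S, a * b ∈ H ∧ a * b ∉ Q}

theorem coreIdeal_inter_subset : coreIdeal S H Q ∩ H ⊆ Q :=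
  fun x ⟨⟨_, hx⟩, hxH⟩ => by simpa using hx 1 S.one_mem 1 S.one_mem (by simpa using hxH)

theorem isIdealOfSubmonoid_coreIdeal (hne : (coreIdeal S H Q).Nonempty) :
    IsIdealOfSubmonoid S (coreIdeal S H Q) := by
  refine ⟨hne, fun x hx => hx.1, fun s hs x hx t ht => ⟨S.mul_mem (S.mul_mem hs hx.1) ht, ?_⟩⟩
  intro s' hs' t' ht'
  have e : s' * (s * x * t) * t' = s' * s * x * (t * t') := by group
  rw [e]
  exact hx.2 _ (S.mul_mem hs' hs) _ (S.mul_mem ht ht')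

theorem isPrimeIdealOfSubmonoid_coreIdeal (hQ : IsPrimeIdealOfSubmonoid (S ⊓ H.toSubmonoid) Q)
    (hne : (coreIdeal S H Q).Nonempty) : IsPrimeIdealOfSubmonoid S (coreIdeal S H Q) := by
  refine ⟨isIdealOfSubmonoid_coreIdeal hne,
    fun h => hQ.one_notMem (coreIdeal_inter_subset ⟨h ▸ SetLike.mem_coe.2 S.one_mem, H.one_mem⟩),
    fun I J hI hJ hIJ => ?_⟩
  have hout : ∀ {K : Set G}, IsIdealOfSubmonoid S K → ¬K ⊆ coreIdeal S H Q →
      ∃ w ∈ K, w ∈ H ∧ w ∉ Q := by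
    intro K hK hKP
    obtain ⟨x, hxK, hxP⟩ := Set.not_subset.1 hKP
    have hx : ¬∀ s ∈ S, ∀ t ∈ S, s * x * t ∈ H → s * x * t ∈ Q := fun h => hxP ⟨hK.2.1 hxK, h⟩
    push Not at hx
    obtain ⟨s, hs, t, ht, hH, hQ⟩ := hx
    exact ⟨_, hK.2.2 s hs x hxK t ht, hH, hQ⟩
  by_contra! hc
  obtain ⟨w, hwI, hwH, hwQ⟩ := hout hI hc.1
  obtain ⟨z, hzJ, hzH, hzQ⟩ := hout hJ hc.2
  refine (hQ.mem_or_mem ⟨hI.2.1 hwI, hwH⟩ ⟨hJ.2.1 hzJ, hzH⟩ fun r hr => ?_).elim hwQ hzQ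
  exact coreIdeal_inter_subset ⟨hIJ (Set.mul_mem_mul (hI.mul_mem_right hwI hr.1) hzJ),
    H.mul_mem (H.mul_mem hwH hr.2) hzH⟩

theorem one_mem_relevantConjugators (hQ : IsPrimeIdealOfSubmonoid (S ⊓ H.toSubmonoid) Q) :
    (1 : G) ∈ relevantConjugators S H Q :=
  ⟨S.one_mem, 1, S.one_mem, by simp, by simpa using hQ.one_notMem⟩

theorem coreIdeal_inter_subset_preimage_conj (hinv : IsGInvariant ((S : Set G) ∩ H))
    (hQ : IsPrimeIdealOfSubmonoid (S ⊓ H.toSubmonoid) Q) {a : G}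
    (ha : a ∈ relevantConjugators S H Q) : coreIdeal S H Q ∩ H ⊆ MulAut.conj a ⁻¹' Q := by
  rintro x ⟨⟨hxS, hx⟩, hxH⟩
  obtain ⟨haS, b, hbS, habH, habQ⟩ := ha
  have haxa : a * x * a⁻¹ ∈ S ⊓ H.toSubmonoid := hinv a x ⟨hxS, hxH⟩
  refine (hQ.mem_or_mem haxa ⟨S.mul_mem haS hbS, habH⟩ fun t ht => ?_).resolve_right habQ
  have hta : a⁻¹ * t * a ∈ S ⊓ H.toSubmonoid := by simpa using hinv a⁻¹ t ht
  have e : a * x * a⁻¹ * t * (a * b) = a * x * (a⁻¹ * t * a * b) := by group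
  rw [e]
  refine hx a haS _ (S.mul_mem hta.1 hbS) ?_
  rw [← e]
  exact H.mul_mem (H.mul_mem haxa.2 ht.2) habH

theorem mem_coreIdeal_of_forall_conj_mem (hnorm : H.Normal)
    (hinv : IsGInvariant ((S : Set G) ∩ H)) (hQ : IsIdealOfSubmonoid (S ⊓ H.toSubmonoid) Q)
    {F : Set G} (hFS : F ⊆ S) (hF : (S : Set G) ⊆ F * ↑(S ⊓ H.toSubmonoid)) {x : G}
    (hx : x ∈ S ⊓ H.toSubmonoid)
    (h : ∀ a ∈ F, a ∈ relevantConjugators S H Q → MulAut.conj a x ∈ Q) :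
    x ∈ coreIdeal S H Q := by
  refine ⟨hx.1, fun s hs t ht hxH => ?_⟩
  obtain ⟨a, haF, u, hu, rfl⟩ := hF hs
  obtain ⟨a', ha'F, u', hu', rfl⟩ := hF ht
  have haa'H : a * a' ∈ H := by
    have e : a * a' = a * u * x * (a' * u') * u'⁻¹ * (a'⁻¹ * (u * x)⁻¹ * a'⁻¹⁻¹) := by group
    rw [e]
    exact H.mul_mem (H.mul_mem hxH (H.inv_mem hu'.2))
      (hnorm.conj_mem _ (H.inv_mem (H.mul_mem hu.2 hx.2)) _)
  have haa' : a * a' ∈ S ⊓ H.toSubmonoid := ⟨S.mul_mem (hFS haF) (hFS ha'F), haa'H⟩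
  have haxa : a * x * a⁻¹ ∈ S ⊓ H.toSubmonoid := hinv a x hx
  have haxa' : a * x * a' ∈ Q := by
    have e : a * x * a' = a * x * a⁻¹ * (a * a') := by group
    rw [e]
    by_cases hq : a * a' ∈ Q
    · exact hQ.mul_mem_left haxa hq
    · exact hQ.mul_mem_right (h a haF ⟨hFS haF, a', hFS ha'F, haa'H, hq⟩) haa'
  have e : a * u * x * (a' * u') = a * u * a⁻¹ * (a * x * a') * u' := by group
  rw [e]
  exact hQ.2.2 _ (hinv a u hu) _ haxa' _ hu'

theorem exists_finset_coreIdeal_inter_eq (hacc : ACCRightIdeals S) (hfi : H.FiniteIndex)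
    (hnorm : H.Normal) (hinv : IsGInvariant ((S : Set G) ∩ H))
    (hQ : IsPrimeIdealOfSubmonoid (S ⊓ H.toSubmonoid) Q) :
    ∃ F : Finset G, F.Nonempty ∧ ↑F ⊆ relevantConjugators S H Q ∧
      coreIdeal S H Q ∩ H = ⋂ a ∈ F, MulAut.conj a ⁻¹' Q := by
  classical
  obtain ⟨F, hFS, hF⟩ := hacc.exists_finset_subset_mul_inf hfi
  have hne : (F.filter (· ∈ relevantConjugators S H Q)).Nonempty := by
    obtain ⟨a, ha, u, hu, hau : a * u = 1⟩ := hF S.one_mem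
    exact ⟨a, Finset.mem_filter.2 ⟨ha, hFS ha, u, hu.1, hau ▸ H.one_mem, hau ▸ hQ.one_notMem⟩⟩
  refine ⟨_, hne, fun a ha => (Finset.mem_filter.1 ha).2, Set.Subset.antisymm
    (Set.subset_iInter₂ fun a ha =>
      coreIdeal_inter_subset_preimage_conj hinv hQ (Finset.mem_filter.1 ha).2) fun x hx => ?_⟩
  rw [Set.mem_iInter₂] at hx
  obtain ⟨a, ha⟩ := hne
  have hxT : x ∈ S ⊓ H.toSubmonoid := by simpa [mul_assoc] using hinv a⁻¹ _ (hQ.1.2.1 (hx a ha))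
  exact ⟨mem_coreIdeal_of_forall_conj_mem hnorm hinv hQ.1 hFS hF hxT fun b hbF hb =>
    hx b (Finset.mem_filter.2 ⟨hbF, hb⟩), hxT.2⟩

theorem exists_preimage_conj_subset_of_coreIdeal_inter_subset (hacc : ACCRightIdeals S)
    (hfi : H.FiniteIndex) (hnorm : H.Normal) (hinv : IsGInvariant ((S : Set G) ∩ H))
    (hQ : IsPrimeIdealOfSubmonoid (S ⊓ H.toSubmonoid) Q) {V : Set G}
    (hV : IsPrimeIdealOfSubmonoid (S ⊓ H.toSubmonoid) V) (hPV : coreIdeal S H Q ∩ H ⊆ V) :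
    ∃ a ∈ relevantConjugators S H Q, MulAut.conj a ⁻¹' Q ⊆ V := by
  obtain ⟨F, hFne, hFrel, hPH⟩ := exists_finset_coreIdeal_inter_eq hacc hfi hnorm hinv hQ
  obtain ⟨a, ha, haV⟩ := hV.exists_subset_of_biInter_subset hFne
    (fun a _ => (hQ.preimage _ (hinv.conj_mem_iff a)).1) (hPH ▸ hPV)
  exact ⟨a, hFrel ha, haV⟩

theorem coreIdeal_nonempty (hacc : ACCRightIdeals S) (hfi : H.FiniteIndex) (hnorm : H.Normal)
    (hinv : IsGInvariant ((S : Set G) ∩ H)) (hQ : IsPrimeIdealOfSubmonoid (S ⊓ H.toSubmonoid) Q) :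
    (coreIdeal S H Q).Nonempty := by
  obtain ⟨F, hFne, -, hPH⟩ := exists_finset_coreIdeal_inter_eq hacc hfi hnorm hinv hQ
  have hI := isIdealOfSubmonoid_biInter hFne fun a _ => (hQ.preimage _ (hinv.conj_mem_iff a)).1
  exact (hPH ▸ hI.1).mono Set.inter_subset_left

theorem isMinimalPrimeOver_preimage_conj (hacc : ACCRightIdeals S) (hfi : H.FiniteIndex)
    (hnorm : H.Normal) (hinv : IsGInvariant ((S : Set G) ∩ H))
    (hQ : IsPrimeIdealOfSubmonoid (S ⊓ H.toSubmonoid) Q) {a : G}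
    (ha : a ∈ relevantConjugators S H Q) :
    IsMinimalPrimeOver (S ⊓ H.toSubmonoid) (coreIdeal S H Q ∩ H) (MulAut.conj a ⁻¹' Q) := by
  refine ⟨hQ.preimage _ (hinv.conj_mem_iff a), coreIdeal_inter_subset_preimage_conj hinv hQ ha,
    fun V hV hPV hVa => ?_⟩
  obtain ⟨b, -, hbV⟩ :=
    exists_preimage_conj_subset_of_coreIdeal_inter_subset hacc hfi hnorm hinv hQ hV hPV
  have hba := (hacc.accIdeals_inf H).preimage_conj_eq_of_subset hinv hQ.1 (hbV.trans hVa)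
  exact hVa.antisymm (hba ▸ hbV)

theorem coreIdeal_inter_eq_sInter (hacc : ACCRightIdeals S) (hfi : H.FiniteIndex)
    (hnorm : H.Normal) (hinv : IsGInvariant ((S : Set G) ∩ H))
    (hQ : IsPrimeIdealOfSubmonoid (S ⊓ H.toSubmonoid) Q) :
    coreIdeal S H Q ∩ H =
      ⋂₀ {Q' | IsMinimalPrimeOver (S ⊓ H.toSubmonoid) (coreIdeal S H Q ∩ H) Q'} := by
  refine (Set.subset_sInter fun _ h => h.2.1).antisymm fun x hx => ?_
  have hmin a (ha : a ∈ relevantConjugators S H Q) :=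
    isMinimalPrimeOver_preimage_conj hacc hfi hnorm hinv hQ ha
  have hxT : x ∈ S ⊓ H.toSubmonoid :=
    hQ.1.2.1 (by simpa using hx _ (hmin 1 (one_mem_relevantConjugators hQ)))
  exact ⟨mem_coreIdeal_of_forall_conj_mem hnorm hinv hQ.1 subset_rfl
    (fun s hs => ⟨s, hs, 1, one_mem _, mul_one s⟩) hxT fun a _ ha => hx _ (hmin a ha), hxT.2⟩

end LyingOver

theorem exists_prime_lying_over_general
    {G : Type u} [Group G] (S : Submonoid G)
    (hacc : ACCRightIdeals S)
    (H : Subgroup G) (hnorm : H.Normal) (hfi : H.FiniteIndex)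
    (hinv : IsGInvariant ((S : Set G) ∩ (H : Set G)))
    (Q : Set G) (hQ : IsPrimeIdealOfSubmonoid (S ⊓ H.toSubmonoid) Q) :
    ∃ P : Set G, LiesOver S H P Q ∧
      ∀ Q' : Set G,
        IsMinimalPrimeOver (S ⊓ H.toSubmonoid) (P ∩ (H : Set G)) Q' →
        ∃ g : G, Q' = (fun x => g⁻¹ * x * g) '' Q := by
  have hmin a (ha : a ∈ relevantConjugators S H Q) :=
    isMinimalPrimeOver_preimage_conj hacc hfi hnorm hinv hQ ha
  refine ⟨coreIdeal S H Q, ⟨isPrimeIdealOfSubmonoid_coreIdeal hQ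
      (coreIdeal_nonempty hacc hfi hnorm hinv hQ),
    by simpa using hmin 1 (one_mem_relevantConjugators hQ),
    coreIdeal_inter_eq_sInter hacc hfi hnorm hinv hQ⟩, fun Q' hQ' => ?_⟩
  obtain ⟨a, ha, haQ'⟩ :=
    exists_preimage_conj_subset_of_coreIdeal_inter_subset hacc hfi hnorm hinv hQ hQ'.1 hQ'.2.1
  exact ⟨a, preimage_conj_eq_image a Q ▸ (hQ'.2.2 _ (hmin a ha).1 (hmin a ha).2.1 haQ').symm⟩

/-- lying over — every prime `Q` of `S ∩ H` has a prime `P` of `S`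
lying over it, and the minimal primes over `P ∩ H` are conjugates of `Q`. -/
theorem exists_prime_lying_over
    {G : Type u} [Group G] (S : Submonoid G)
    (hpoly : IsPolycyclicByFinite G)
    (hquot : IsGroupOfQuotients S)
    (hacc : ACCRightIdeals S)
    (H : Subgroup G) (hnorm : H.Normal) (hfi : H.FiniteIndex)
    (htf : ∀ h ∈ H, ∀ n : ℕ, 0 < n → h ^ n = 1 → h = 1)
    (hinv : IsGInvariant ((S : Set G) ∩ (H : Set G)))
    (Q : Set G) (hQ : IsPrimeIdealOfSubmonoid (S ⊓ H.toSubmonoid) Q) :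
    ∃ P : Set G, LiesOver S H P Q ∧
      ∀ Q' : Set G,
        IsMinimalPrimeOver (S ⊓ H.toSubmonoid) (P ∩ (H : Set G)) Q' →
        ∃ g : G, Q' = (fun x => g⁻¹ * x * g) '' Q :=
  exists_prime_lying_over_general S hacc H hnorm hfi hinv Q hQ
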